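/- Let (R, m) be a Noetherian local ring of positive dimension and let H = ⋃_{n>0} (0 :_R m^n) be the zeroth local cohomology ideal. If I is an ideal containing H such that I/H is a trace ideal of R/H containing a non-zerodivisor of R/H, then I is a trace ideal of R. -/

import Mathlib

/-- The trace ideal of an `R`-module `M`. -/
def traceIdeal (R : Type*) [CommRing R] (M : Type*) [AddCommGroup M] [Module R M] : Ideal R :=
  ⨆ f : M →ₗ[R] R, LinearMap.range f

/-!
Write `H` for the `𝔪`-power torsion of `R`. If `𝔪ⁿ z = 0` then `𝔪ⁿ f z = 0`, so every
`f : I →ₗ[R] R` maps `H` into `H` and descends to an `R ⧸ H`-linear map `I ⧸ H → R ⧸ H`. As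
`I ⧸ H` is a trace ideal, `f z` lies in `I` modulo `H`, hence in `I` because `H ≤ I`.
-/

theorem LinearMap.exists_comp_eq_of_surjective_of_ker_le {R M N P : Type*} [Ring R]
    [AddCommGroup M] [AddCommGroup N] [AddCommGroup P] [Module R M] [Module R N] [Module R P]
    {p : M →ₗ[R] N} (hp : Function.Surjective p) (F : M →ₗ[R] P) (h : ker p ≤ ker F) :
    ∃ g : N →ₗ[R] P, g ∘ₗ p = F :=
  ⟨(ker p).liftQ F h ∘ₗ (p.quotKerEquivOfSurjective hp).symm.toLinearMap, by
    ext x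
    simp⟩

section

variable {R : Type*} [CommRing R]

theorem Ideal.apply_mem_colon_bot {I : Ideal R} (f : I →ₗ[R] R) {S : Set R} {z : I}
    (hz : (z : R) ∈ (⊥ : Ideal R).colon S) : f z ∈ (⊥ : Ideal R).colon S := by
  rw [Submodule.mem_colon] at hz ⊢
  intro s hs
  have hsz : s • z = 0 := Subtype.ext (by simpa [mul_comm] using hz s hs)
  rw [Submodule.mem_bot, smul_eq_mul, mul_comm, ← smul_eq_mul, ← map_smul, hsz, map_zero]

theorem Ideal.mem_iSup_colon_bot_pow_iff (𝔞 : Ideal R) {x : R} :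
    x ∈ ⨆ n : ℕ, (⊥ : Ideal R).colon ((𝔞 ^ (n + 1) : Ideal R) : Set R) ↔
      ∃ n : ℕ, x ∈ (⊥ : Ideal R).colon ((𝔞 ^ (n + 1) : Ideal R) : Set R) := by
  refine Submodule.mem_iSup_of_directed _ (Monotone.directed_le fun a b hab ↦ ?_)
  exact Submodule.colon_mono le_rfl (Ideal.pow_le_pow_right (by omega))

theorem Ideal.apply_mem_iSup_colon_bot_pow {I : Ideal R} (f : I →ₗ[R] R) (𝔞 : Ideal R) {z : I}
    (hz : (z : R) ∈ ⨆ n : ℕ, (⊥ : Ideal R).colon ((𝔞 ^ (n + 1) : Ideal R) : Set R)) :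
    f z ∈ ⨆ n : ℕ, (⊥ : Ideal R).colon ((𝔞 ^ (n + 1) : Ideal R) : Set R) := by
  obtain ⟨n, hn⟩ := (mem_iSup_colon_bot_pow_iff 𝔞).1 hz
  exact (mem_iSup_colon_bot_pow_iff 𝔞).2 ⟨n, apply_mem_colon_bot f hn⟩

theorem Ideal.exists_linearMap_map_quotient_of_apply_mem {H I : Ideal R} (f : I →ₗ[R] R)
    (hf : ∀ z : I, (z : R) ∈ H → f z ∈ H) :
    ∃ g : I.map (Quotient.mk H) →ₗ[R ⧸ H] R ⧸ H,
      ∀ z : I, g ⟨Quotient.mk H z, mem_map_of_mem _ z.2⟩ = Quotient.mk H (f z) := by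
  let p : I →ₗ[R] I.map (Quotient.mk H) :=
    LinearMap.codRestrict ((I.map (Quotient.mk H)).restrictScalars R) (H.mkQ ∘ₗ I.subtype)
      fun z ↦ mem_map_of_mem _ z.2
  have hp : Function.Surjective p := by
    rintro ⟨y, hy⟩
    obtain ⟨x, hx, rfl⟩ := (mem_map_iff_of_surjective _ Quotient.mk_surjective).1 hy
    exact ⟨⟨x, hx⟩, rfl⟩
  have hker : LinearMap.ker p ≤ LinearMap.ker (H.mkQ ∘ₗ f) := fun z hz ↦ by
    have hzH : (z : R) ∈ H := Quotient.eq_zero_iff_mem.1 (congrArg Subtype.val hz)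
    simpa [Quotient.eq_zero_iff_mem] using hf z hzH
  obtain ⟨g, hg⟩ := LinearMap.exists_comp_eq_of_surjective_of_ker_le hp _ hker
  exact ⟨g.extendScalarsOfSurjective Quotient.mk_surjective, fun z ↦ LinearMap.congr_fun hg z⟩

theorem Ideal.apply_mem_of_traceIdeal_map_quotient_le {H I : Ideal R} (hHI : H ≤ I)
    (htr : traceIdeal (R ⧸ H) (I.map (Quotient.mk H)) ≤ I.map (Quotient.mk H))
    (f : I →ₗ[R] R) (hf : ∀ z : I, (z : R) ∈ H → f z ∈ H) (z : I) : f z ∈ I := by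
  obtain ⟨g, hg⟩ := exists_linearMap_map_quotient_of_apply_mem f hf
  have hgz : Quotient.mk H (f z) ∈ traceIdeal (R ⧸ H) (I.map (Quotient.mk H)) :=
    le_iSup (fun g ↦ LinearMap.range g) g ⟨_, hg z⟩
  exact (mem_quotient_iff_mem hHI).1 (htr hgz)

theorem Ideal.le_traceIdeal (I : Ideal R) : I ≤ traceIdeal R I :=
  le_iSup_of_le I.subtype (Submodule.range_subtype I).ge

end

theorem traceIdeal_of_quotient_zeroth_local_cohomology_general (R : Type*) [CommRing R]
    [IsLocalRing R]
    (H : Ideal R)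
    (hH : H = ⨆ n : ℕ, Submodule.colon ⊥ (((IsLocalRing.maximalIdeal R) ^ (n + 1) : Ideal R) : Set R))
    (I : Ideal R) (hHI : H ≤ I)
    (htr : traceIdeal (R ⧸ H) (I.map (Ideal.Quotient.mk H)) = I.map (Ideal.Quotient.mk H)) :
    traceIdeal R I = I := by
  refine le_antisymm (iSup_le fun f ↦ ?_) I.le_traceIdeal
  rintro _ ⟨z, rfl⟩
  refine Ideal.apply_mem_of_traceIdeal_map_quotient_le hHI htr.le f (fun y hy ↦ ?_) z
  rw [hH] at hy ⊢
  exact Ideal.apply_mem_iSup_colon_bot_pow f _ hy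

/-- Let `(R, m)` be a Noetherian local ring of positive dimension and let
`H = ⋃_{n>0} (0 :_R m^n)` be the zeroth local cohomology ideal. If `I ⊇ H` is an ideal
such that `I/H` is a trace ideal of `R/H` containing a non-zerodivisor of `R/H`, then `I`
is a trace ideal of `R`. -/
theorem traceIdeal_of_quotient_zeroth_local_cohomology (R : Type*) [CommRing R]
    [IsNoetherianRing R] [IsLocalRing R] (hdim : 0 < ringKrullDim R)
    (H : Ideal R)
    (hH : H = ⨆ n : ℕ, Submodule.colon ⊥ (((IsLocalRing.maximalIdeal R) ^ (n + 1) : Ideal R) : Set R))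
    (I : Ideal R) (hHI : H ≤ I)
    (htr : traceIdeal (R ⧸ H) (I.map (Ideal.Quotient.mk H)) = I.map (Ideal.Quotient.mk H))
    (hreg : ∃ x ∈ I.map (Ideal.Quotient.mk H), x ∈ nonZeroDivisors (R ⧸ H)) :
    traceIdeal R I = I :=
  traceIdeal_of_quotient_zeroth_local_cohomology_general R H hH I hHI htr
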